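/- Assume in addition p ≡ 1 (mod 4), q ≡ 3 (mod 4) and (|q − p| + 1)² < pq. Then the 2-adic complexity of the balanced Whiteman generalized cyclotomic sequence s satisfies Φ₂(s) ≥ pq − p − q − 1. -/

import Mathlib

/-!
For `0 < n < pq` the balanced Whiteman sequence is `sₙ = (1 - λ(n)) / 2`, where `λ(n)` is
`(n/p)(n/q)` on units, `(q/p)(n/p)` on multiples of `q` and `(p/q)(n/q)` on multiples of `p`.
Hence `2 S(2) = 2^N - 2 - Σ λ(n) 2^n`. Modulo a prime `r ∣ 2^N - 1` the Chinese remainder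
theorem splits the last sum into the quadratic Gauss sums `Gₚ = Σ (k/p) 2^{qk}` and
`G_q = Σ (l/q) 2^{pl}`, so `r ∣ S(2)` forces `(q/p)(p/q) Gₚ G_q + Gₚ + G_q = -1`.
If `2^q = 1` then `Gₚ = 0` (and symmetrically); otherwise, as `p ≡ 1 (mod 4)`, reciprocity
gives `(q/p)(p/q) = 1` and `(Gₚ + 1)(G_q + 1) = 0`. Either way some Gauss sum against a primitive
`ℓ`-th root of unity equals `-1`, which is impossible: its square `±ℓ` would give `r ∣ ℓ ∓ 1`,
while `ℓ ∣ r - 1`. So `gcd(2^N - 1, S(2)) = 1` and the 2-adic complexity is `N`.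
-/

open Finset

section

variable {R : Type*} [CommRing R]

def gaussSumRange {p : ℕ} (χ : MulChar (ZMod p) R) (w : R) : R :=
  ∑ k ∈ range p, χ k * w ^ k

theorem sum_range_eq_sum_zmod {M : Type*} [AddCommMonoid M] (n : ℕ) [NeZero n]
    (f : ZMod n → M) : ∑ k ∈ range n, f k = ∑ a : ZMod n, f a := by
  refine sum_nbij' (↑) ZMod.val (fun _ _ => mem_univ _)
    (fun a _ => mem_range.mpr a.val_lt) (fun k hk => ZMod.val_cast_of_lt (mem_range.mp hk))
    (fun a _ => ZMod.natCast_zmod_val a) (fun _ _ => rfl)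

theorem gaussSumRange_eq_gaussSum {p : ℕ} [NeZero p] (χ : MulChar (ZMod p) R) {w : R}
    (hw : w ^ p = 1) : gaussSumRange χ w = gaussSum χ (AddChar.zmodChar p hw) := by
  rw [gaussSumRange, gaussSum, ← sum_range_eq_sum_zmod]
  simp only [AddChar.zmodChar_apply']

theorem gaussSumRange_one [IsDomain R] {p : ℕ} [NeZero p] {χ : MulChar (ZMod p) R}
    (hχ : χ ≠ 1) : gaussSumRange χ 1 = 0 := by
  simpa [gaussSumRange, sum_range_eq_sum_zmod p χ] using MulChar.sum_eq_zero_of_ne_one hχ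

theorem gaussSumRange_sq [IsDomain R] {p : ℕ} [Fact p.Prime] {χ : MulChar (ZMod p) R}
    (hχ : χ ≠ 1) (hχ₂ : χ.IsQuadratic) {w : R} (hw : IsPrimitiveRoot w p) :
    gaussSumRange χ w ^ 2 = χ (-1) * p := by
  rw [gaussSumRange_eq_gaussSum χ hw.pow_eq_one,
    gaussSum_sq hχ hχ₂ (AddChar.zmodChar_primitive_of_primitive_root p hw), ZMod.card]

theorem sum_range_ite_dvd_mul_pow {p q : ℕ} (hq : q ≠ 0) (χ : MulChar (ZMod p) R) (z : R) :
    ∑ n ∈ range (p * q), (if q ∣ n then χ n else 0) * z ^ n = χ q * gaussSumRange χ (z ^ q) := by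
  rw [gaussSumRange, mul_sum]
  simp only [ite_mul, zero_mul]
  rw [← sum_filter]
  refine sum_nbij' (· / q) (· * q) ?_ ?_ ?_ ?_ ?_
  · intro n hn
    rw [mem_filter, mem_range] at hn
    exact mem_range.mpr (Nat.div_lt_of_lt_mul (mul_comm p q ▸ hn.1))
  · intro k hk
    rw [mem_range] at hk
    rw [mem_filter, mem_range]
    exact ⟨Nat.mul_lt_mul_of_pos_right hk (Nat.pos_of_ne_zero hq), dvd_mul_left q k⟩
  · intro n hn
    exact Nat.div_mul_cancel (mem_filter.mp hn).2
  · intro k _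
    exact Nat.mul_div_cancel k (Nat.pos_of_ne_zero hq)
  · intro n hn
    obtain ⟨k, rfl⟩ := (mem_filter.mp hn).2
    rw [Nat.mul_div_cancel_left k (Nat.pos_of_ne_zero hq)]
    push_cast
    rw [map_mul, ← pow_mul]
    ring

theorem natCast_mod_mul_right {p q : ℕ} (n : ℕ) : ((n % (p * q) : ℕ) : ZMod p) = n :=
  (ZMod.natCast_eq_natCast_iff' _ _ p).mpr (Nat.mod_mod_of_dvd n (dvd_mul_right p q))

theorem sum_range_mulChar_mul_mulChar_mul_pow {p q : ℕ} [NeZero p] [NeZero q]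
    (hpq : p.Coprime q) (χ : MulChar (ZMod p) R) (ψ : MulChar (ZMod q) R) {z : R}
    (hz : z ^ (p * q) = 1) :
    ∑ n ∈ range (p * q), χ n * ψ n * z ^ n
      = χ q * gaussSumRange χ (z ^ q) * (ψ p * gaussSumRange ψ (z ^ p)) := by
  -- `(k, l) ↦ kq + lp mod pq` is a bijection `range p × range q → range (p * q)`.
  set f : ℕ × ℕ → ℕ := fun kl => (kl.1 * q + kl.2 * p) % (p * q)
  have hfp (kl : ℕ × ℕ) : (f kl : ZMod p) = kl.1 * q := by
    simp [f, natCast_mod_mul_right]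
  have hfq (kl : ℕ × ℕ) : (f kl : ZMod q) = kl.2 * p := by
    simp [f, mul_comm p q, natCast_mod_mul_right]
  have hinj : Set.InjOn f (range p ×ˢ range q : Finset (ℕ × ℕ)) := by
    rintro ⟨k, l⟩ hkl ⟨k', l'⟩ hkl' he
    simp only [coe_product, coe_range, Set.mem_prod, Set.mem_Iio] at hkl hkl'
    have h1 := hfp (k, l)
    have h2 := hfq (k, l)
    rw [he, hfp] at h1
    rw [he, hfq] at h2
    have hk := ((ZMod.isUnit_iff_coprime q p).mpr hpq.symm).mul_right_cancel h1.symm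
    have hl := ((ZMod.isUnit_iff_coprime p q).mpr hpq).mul_right_cancel h2.symm
    rw [ZMod.natCast_eq_natCast_iff', Nat.mod_eq_of_lt hkl.1, Nat.mod_eq_of_lt hkl'.1] at hk
    rw [ZMod.natCast_eq_natCast_iff', Nat.mod_eq_of_lt hkl.2, Nat.mod_eq_of_lt hkl'.2] at hl
    rw [hk, hl]
  have himage : (range p ×ˢ range q).image f = range (p * q) := by
    refine eq_of_subset_of_card_le (fun n hn => ?_) ?_
    · obtain ⟨kl, -, rfl⟩ := mem_image.mp hn
      exact mem_range.mpr (Nat.mod_lt _ (Nat.pos_of_ne_zero (NeZero.ne _)))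
    · rw [card_image_of_injOn hinj, card_product, card_range, card_range, card_range]
  rw [← himage, sum_image hinj, sum_product, gaussSumRange, gaussSumRange, mul_sum, mul_sum,
    sum_mul_sum]
  refine sum_congr rfl fun k _ => sum_congr rfl fun l _ => ?_
  rw [hfp, hfq, ← pow_eq_pow_mod _ hz]
  simp only [map_mul]
  ring

/-- On `0 < n < pq` exactly one of the three summands is nonzero. -/
def whitemanSign {p q : ℕ} (χ : MulChar (ZMod p) R) (ψ : MulChar (ZMod q) R) (n : ℕ) : R :=
  χ n * ψ n + χ q * (if q ∣ n then χ n else 0) + ψ p * (if p ∣ n then ψ n else 0)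

theorem map_whitemanSign {S : Type*} [CommRing S] (f : R →+* S) {p q : ℕ}
    (χ : MulChar (ZMod p) R) (ψ : MulChar (ZMod q) R) (n : ℕ) :
    f (whitemanSign χ ψ n) = whitemanSign (χ.ringHomComp f) (ψ.ringHomComp f) n := by
  simp only [whitemanSign, map_add, map_mul, apply_ite f, map_zero, MulChar.ringHomComp_apply]

theorem sum_whitemanSign_mul_pow {p q : ℕ} [NeZero p] [NeZero q] (hpq : p.Coprime q)
    (χ : MulChar (ZMod p) R) (ψ : MulChar (ZMod q) R) {z : R} (hz : z ^ (p * q) = 1) :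
    ∑ n ∈ range (p * q), whitemanSign χ ψ n * z ^ n
      = χ q * gaussSumRange χ (z ^ q) * (ψ p * gaussSumRange ψ (z ^ p))
        + χ q ^ 2 * gaussSumRange χ (z ^ q) + ψ p ^ 2 * gaussSumRange ψ (z ^ p) := by
  have hp := sum_range_ite_dvd_mul_pow (NeZero.ne p) ψ z
  rw [mul_comm q p] at hp
  simp only [whitemanSign, add_mul, sum_add_distrib]
  rw [sum_range_mulChar_mul_mulChar_mul_pow hpq χ ψ hz]
  simp only [mul_assoc, ← mul_sum, hp, sum_range_ite_dvd_mul_pow (NeZero.ne q) χ z]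
  ring

end

theorem quadraticChar_ringHomComp_ne_one {F : Type*} [Field F] [Fintype F] [DecidableEq F]
    (hF : ringChar F ≠ 2) {R : Type*} [CommRing R] [Nontrivial R] (hR : ringChar R ≠ 2) :
    (quadraticChar F).ringHomComp (Int.castRingHom R) ≠ 1 := by
  obtain ⟨a, ha⟩ := quadraticChar_exists_neg_one' hF
  refine MulChar.ne_one_iff.mpr ⟨a, ?_⟩
  rw [MulChar.ringHomComp_apply, ha]
  simpa using Ring.neg_one_ne_one_of_char_ne_two hR

abbrev legendreChar (p : ℕ) [Fact p.Prime] (R : Type*) [CommRing R] : MulChar (ZMod p) R :=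
  (quadraticChar (ZMod p)).ringHomComp (Int.castRingHom R)

theorem gaussSumRange_legendreChar_ne_neg_one {p r : ℕ} [hp : Fact p.Prime] [hr : Fact r.Prime]
    (hp2 : p ≠ 2) (hr2 : r ≠ 2) {w : ZMod r} (hw : IsPrimitiveRoot w p) :
    gaussSumRange (legendreChar p (ZMod r)) w ≠ -1 := by
  -- A value `-1` would make `±p = 1` in `ZMod r`, i.e. `r ∣ p ∓ 1`, whereas `p ∣ r - 1`.
  intro hS
  have hsq : gaussSumRange (legendreChar p (ZMod r)) w ^ 2 = legendreChar p (ZMod r) (-1) * p :=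
    gaussSumRange_sq (quadraticChar_ringHomComp_ne_one (by rwa [ZMod.ringChar_zmod_n])
      (by rwa [ZMod.ringChar_zmod_n])) ((quadraticChar_isQuadratic _).comp _) hw
  have hpr : p < r := by
    have hdvd : p ∣ r - 1 := hw.dvd_of_pow_eq_one _ <|
      ZMod.pow_card_sub_one_eq_one (hw.ne_zero hp.out.ne_zero)
    have := hr.out.two_le
    have := Nat.le_of_dvd (by omega) hdvd
    omega
  obtain ⟨m, rfl⟩ := hp.out.odd_of_ne_two hp2
  rw [hS, MulChar.ringHomComp_apply] at hsq
  rcases quadraticChar_dichotomy (neg_ne_zero.mpr (one_ne_zero : (1 : ZMod (2 * m + 1)) ≠ 0))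
    with h | h
  · have h1 : ((2 * m + 1 : ℕ) : ZMod r) = ((1 : ℕ) : ZMod r) := by
      rw [h, map_one] at hsq
      push_cast at hsq ⊢
      linear_combination -hsq
    rw [ZMod.natCast_eq_natCast_iff', Nat.mod_eq_of_lt hpr, Nat.mod_eq_of_lt (by omega)] at h1
    exact hp.out.ne_one (by omega)
  · have h1 : ((2 * m + 2 : ℕ) : ZMod r) = 0 := by
      rw [h, map_neg, map_one] at hsq
      push_cast at hsq ⊢
      linear_combination hsq
    have := Nat.le_of_dvd (by omega) ((ZMod.natCast_eq_zero_iff _ r).mp h1)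
    have h2 : 2 ∣ r := ⟨m + 1, by omega⟩
    exact hr2 ((Nat.prime_dvd_prime_iff_eq Nat.prime_two hr.out).mp h2).symm

theorem quadraticChar_mul_quadraticChar_eq_one {p q : ℕ} [Fact p.Prime] [Fact q.Prime]
    (hp4 : p % 4 = 1) (hq2 : q ≠ 2) (hpq : p ≠ q) :
    quadraticChar (ZMod p) q * quadraticChar (ZMod q) p = 1 := by
  have h := legendreSym.quadratic_reciprocity_one_mod_four hp4 hq2
  simp only [legendreSym, Int.cast_natCast] at h
  rw [h, ← sq, quadraticChar_sq_one (ZMod.prime_ne_zero p q hpq)]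

theorem isPrimitiveRoot_or_eq_one {M : Type*} [CommMonoid M] {ℓ : ℕ} [Fact ℓ.Prime] {w : M}
    (hw : w ^ ℓ = 1) : w = 1 ∨ IsPrimitiveRoot w ℓ := by
  by_cases h : w = 1
  · exact .inl h
  · exact .inr (orderOf_eq_prime hw h ▸ IsPrimitiveRoot.orderOf w)

theorem sum_whitemanSign_mul_pow_ne_neg_one {p q r : ℕ} [hp : Fact p.Prime] [hq : Fact q.Prime]
    [Fact r.Prime] (hpq : p ≠ q) (hp4 : p % 4 = 1) (hq2 : q ≠ 2) (hr2 : r ≠ 2) {z : ZMod r}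
    (hz : z ^ (p * q) = 1) (hz1 : z ≠ 1) :
    ∑ n ∈ range (p * q), whitemanSign (legendreChar p (ZMod r)) (legendreChar q (ZMod r)) n * z ^ n
      ≠ -1 := by
  have hp2 : p ≠ 2 := by omega
  have hcop : p.Coprime q := (Nat.coprime_primes hp.out hq.out).mpr hpq
  have hχ : legendreChar p (ZMod r) ≠ 1 := quadraticChar_ringHomComp_ne_one
    (by rwa [ZMod.ringChar_zmod_n]) (by rwa [ZMod.ringChar_zmod_n])
  have hψ : legendreChar q (ZMod r) ≠ 1 := quadraticChar_ringHomComp_ne_one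
    (by rwa [ZMod.ringChar_zmod_n]) (by rwa [ZMod.ringChar_zmod_n])
  have hcp : legendreChar p (ZMod r) q ^ 2 = 1 := by
    rw [MulChar.ringHomComp_apply, ← map_pow, quadraticChar_sq_one (ZMod.prime_ne_zero p q hpq),
      map_one]
  have hcq : legendreChar q (ZMod r) p ^ 2 = 1 := by
    rw [MulChar.ringHomComp_apply, ← map_pow,
      quadraticChar_sq_one (ZMod.prime_ne_zero q p hpq.symm), map_one]
  rw [sum_whitemanSign_mul_pow hcop _ _ hz, hcp, hcq, one_mul, one_mul]
  intro h
  have hzq : (z ^ q) ^ p = 1 := by rw [← pow_mul, mul_comm, hz]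
  have hzp : (z ^ p) ^ q = 1 := by rw [← pow_mul, hz]
  rcases isPrimitiveRoot_or_eq_one hzq with h1 | h1 <;>
    rcases isPrimitiveRoot_or_eq_one hzp with h2 | h2
  · exact hz1 (by simpa [hcop.symm] using pow_gcd_eq_one.mpr ⟨h1, h2⟩)
  · rw [h1, gaussSumRange_one hχ] at h
    exact gaussSumRange_legendreChar_ne_neg_one hq2 hr2 h2 (by linear_combination h)
  · rw [h2, gaussSumRange_one hψ] at h
    exact gaussSumRange_legendreChar_ne_neg_one hp2 hr2 h1 (by linear_combination h)
  · have hrec : legendreChar p (ZMod r) q * legendreChar q (ZMod r) p = 1 := by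
      rw [MulChar.ringHomComp_apply, MulChar.ringHomComp_apply, ← map_mul,
        quadraticChar_mul_quadraticChar_eq_one hp4 hq2 hpq, map_one]
    have hfac : (gaussSumRange (legendreChar p (ZMod r)) (z ^ q) + 1)
        * (gaussSumRange (legendreChar q (ZMod r)) (z ^ p) + 1) = 0 := by
      linear_combination h - gaussSumRange (legendreChar p (ZMod r)) (z ^ q)
        * gaussSumRange (legendreChar q (ZMod r)) (z ^ p) * hrec
    rcases mul_eq_zero.mp hfac with h3 | h3
    · exact gaussSumRange_legendreChar_ne_neg_one hp2 hr2 h1 (by linear_combination h3)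
    · exact gaussSumRange_legendreChar_ne_neg_one hq2 hr2 h2 (by linear_combination h3)

theorem quadraticChar_pow_of_isPrimitiveRoot {F : Type*} [Field F] [Fintype F] [DecidableEq F]
    (hF : ringChar F ≠ 2) {g : F} (hg : IsPrimitiveRoot g (Fintype.card F - 1)) (a : ℕ) :
    quadraticChar F (g ^ a) = (-1) ^ a := by
  have hodd := FiniteField.odd_card_of_char_ne_two hF
  have hcard : 1 < Fintype.card F := Fintype.one_lt_card
  have hsq : ¬IsSquare g := by
    rw [FiniteField.isSquare_iff hF (hg.ne_zero (by omega))]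
    exact hg.pow_ne_one_of_pos_of_lt (by omega) (by omega)
  rw [map_pow, quadraticChar_neg_one_iff_not_isSquare.mpr hsq]

def cyclotomicClass (p g i : ℕ) : Finset ℕ :=
  (range ((p - 1) / 2)).image fun t => g ^ (2 * t + i) % p

def whitemanClass (p q g x i : ℕ) : Finset ℕ :=
  (range ((p - 1) * (q - 1) / 2)).image fun s => g ^ s * x ^ i % (p * q)

theorem exists_mem_cyclotomicClass {p g k : ℕ} [hp : Fact p.Prime] (hp2 : p ≠ 2)
    (hg : IsPrimitiveRoot (g : ZMod p) (p - 1)) (hk : k < p) (hk0 : (k : ZMod p) ≠ 0) :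
    ∃ i < 2, quadraticChar (ZMod p) k = (-1) ^ i ∧ k ∈ cyclotomicClass p g i := by
  have hodd := hp.out.mod_two_eq_one_iff_ne_two.mpr hp2
  have := hp.out.two_le
  have : NeZero (p - 1) := ⟨by omega⟩
  obtain ⟨a, ha, hga⟩ := hg.eq_pow_of_pow_eq_one (ZMod.pow_card_sub_one_eq_one hk0)
  refine ⟨a % 2, Nat.mod_lt _ two_pos, ?_, mem_image.mpr ⟨a / 2, mem_range.mpr (by omega), ?_⟩⟩
  · rw [← hga, quadraticChar_pow_of_isPrimitiveRoot (by rwa [ZMod.ringChar_zmod_n])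
      (by rwa [ZMod.card]), neg_one_pow_eq_pow_mod_two]
  · rw [Nat.div_add_mod, ← ZMod.val_natCast, Nat.cast_pow, hga, ZMod.val_cast_of_lt hk]

theorem exists_mem_whitemanClass {p q g x n : ℕ} [hp : Fact p.Prime] [hq : Fact q.Prime]
    (hpq : p ≠ q) (hgcd : (p - 1).gcd (q - 1) = 2) (hgp : IsPrimitiveRoot (g : ZMod p) (p - 1))
    (hgq : IsPrimitiveRoot (g : ZMod q) (q - 1)) (hxp : x % p = g % p) (hxq : x % q = 1)
    (hn : n < p * q) (hnp : (n : ZMod p) ≠ 0) (hnq : (n : ZMod q) ≠ 0) :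
    ∃ i < 2, quadraticChar (ZMod p) n * quadraticChar (ZMod q) n = (-1) ^ i
      ∧ n ∈ whitemanClass p q g x i := by
  have h2p : 2 ∣ p - 1 := hgcd ▸ Nat.gcd_dvd_left _ _
  have h2q : 2 ∣ q - 1 := hgcd ▸ Nat.gcd_dvd_right _ _
  have := hp.out.two_le
  have := hq.out.two_le
  have : NeZero (p - 1) := ⟨by omega⟩
  have : NeZero (q - 1) := ⟨by omega⟩
  -- Solve `k + i ≡ a (mod p - 1)`, `k ≡ b (mod q - 1)`; since the gcd is `2`, the lcm is `e`.
  obtain ⟨a, -, hga⟩ := hgp.eq_pow_of_pow_eq_one (ZMod.pow_card_sub_one_eq_one hnp)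
  obtain ⟨b, -, hgb⟩ := hgq.eq_pow_of_pow_eq_one (ZMod.pow_card_sub_one_eq_one hnq)
  have hcrt : a + (p - 1) - (a + b) % 2 ≡ b [MOD (p - 1).gcd (q - 1)] := by
    rw [hgcd, Nat.ModEq]
    omega
  set k := Nat.chineseRemainder' hcrt
  have hklt : (k : ℕ) < (p - 1) * (q - 1) / 2 := by
    rw [← Nat.gcd_mul_lcm (p - 1) (q - 1), hgcd, Nat.mul_div_cancel_left _ two_pos]
    exact Nat.chineseRemainder'_lt_lcm hcrt (NeZero.ne _) (NeZero.ne _)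
  refine ⟨(a + b) % 2, Nat.mod_lt _ two_pos, ?_, mem_image.mpr ⟨k, mem_range.mpr hklt, ?_⟩⟩
  · rw [← hga, ← hgb, quadraticChar_pow_of_isPrimitiveRoot (by rw [ZMod.ringChar_zmod_n]; omega)
      (by rwa [ZMod.card]), quadraticChar_pow_of_isPrimitiveRoot
      (by rw [ZMod.ringChar_zmod_n]; omega) (by rwa [ZMod.card]), ← pow_add,
      neg_one_pow_eq_pow_mod_two]
  · have hxp' : (x : ZMod p) = g := by rw [← ZMod.natCast_mod, hxp, ZMod.natCast_mod]
    have hxq' : (x : ZMod q) = 1 := by rw [← ZMod.natCast_mod, hxq, Nat.cast_one]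
    have hmodp : g ^ (k : ℕ) * x ^ ((a + b) % 2) ≡ n [MOD p] := by
      rw [← ZMod.natCast_eq_natCast_iff]
      push_cast
      rw [hxp', ← pow_add, ← hga]
      refine pow_eq_pow_of_modEq ?_ hgp.pow_eq_one
      calc (k : ℕ) + (a + b) % 2 ≡ a + (p - 1) - (a + b) % 2 + (a + b) % 2 [MOD p - 1] :=
            k.2.1.add_right _
        _ = a + (p - 1) := by omega
        _ ≡ a [MOD p - 1] := Nat.add_modEq_right
    have hmodq : g ^ (k : ℕ) * x ^ ((a + b) % 2) ≡ n [MOD q] := by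
      rw [← ZMod.natCast_eq_natCast_iff]
      push_cast
      rw [hxq', one_pow, mul_one, ← hgb]
      exact pow_eq_pow_of_modEq k.2.2 hgq.pow_eq_one
    rw [(Nat.modEq_and_modEq_iff_modEq_mul ((Nat.coprime_primes hp.out hq.out).mpr hpq)).mp
      ⟨hmodp, hmodq⟩, Nat.mod_eq_of_lt hn]

/-- The class `Cᵢ` without `0`, which `C₀` also contains. -/
def balancedWhitemanClass (p q g x i : ℕ) : Finset ℕ :=
  whitemanClass p q g x i ∪ (cyclotomicClass p g i).image (fun k => k * q % (p * q))
    ∪ (cyclotomicClass q g i).image (fun k => k * p % (p * q))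

theorem whitemanSign_comm {R : Type*} [CommRing R] {p q : ℕ} (χ : MulChar (ZMod p) R)
    (ψ : MulChar (ZMod q) R) (n : ℕ) : whitemanSign χ ψ n = whitemanSign ψ χ n := by
  simp only [whitemanSign]
  ring

theorem exists_whitemanSign_eq_of_dvd {p q g n : ℕ} [hp : Fact p.Prime] [hq : Fact q.Prime]
    (hpq : p ≠ q) (hp2 : p ≠ 2) (hg : IsPrimitiveRoot (g : ZMod p) (p - 1)) (hn : n < p * q)
    (hn0 : n ≠ 0) (hqn : q ∣ n) :
    ∃ i < 2, whitemanSign (quadraticChar (ZMod p)) (quadraticChar (ZMod q)) n = (-1) ^ i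
      ∧ n ∈ (cyclotomicClass p g i).image (fun k => k * q % (p * q)) := by
  obtain ⟨k, rfl⟩ := hqn
  have hk : k < p := Nat.lt_of_mul_lt_mul_left (mul_comm p q ▸ hn)
  have hk0 : k ≠ 0 := by rintro rfl; simp at hn0
  have hpk : ¬p ∣ k := Nat.not_dvd_of_pos_of_lt (Nat.pos_of_ne_zero hk0) hk
  have hpn : ¬p ∣ q * k := fun h => ((Nat.Prime.dvd_mul hp.out).mp h).elim
    (fun h => hpq ((Nat.prime_dvd_prime_iff_eq hp.out hq.out).mp h)) hpk
  obtain ⟨i, hi, hχ, hmem⟩ :=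
    exists_mem_cyclotomicClass hp2 hg hk (by rwa [Ne, ZMod.natCast_eq_zero_iff])
  refine ⟨i, hi, ?_, mem_image.mpr ⟨k, hmem, by rw [mul_comm k q, Nat.mod_eq_of_lt hn]⟩⟩
  simp only [whitemanSign, if_pos (dvd_mul_right q k), if_neg hpn, Nat.cast_mul,
    ZMod.natCast_self, zero_mul, quadraticChar_zero, mul_zero, zero_add, add_zero, map_mul,
    ← mul_assoc, ← sq, quadraticChar_sq_one (ZMod.prime_ne_zero p q hpq), one_mul, hχ]

theorem two_mul_add_whitemanSign_eq {p q g x : ℕ} [hp : Fact p.Prime] [hq : Fact q.Prime]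
    (hpq : p ≠ q) (hp2 : p ≠ 2) (hq2 : q ≠ 2) (hgcd : (p - 1).gcd (q - 1) = 2)
    (hgp : IsPrimitiveRoot (g : ZMod p) (p - 1)) (hgq : IsPrimitiveRoot (g : ZMod q) (q - 1))
    (hxp : x % p = g % p) (hxq : x % q = 1) {s : ℕ → ℕ}
    (hs : ∀ i < 2, ∀ n < p * q, n ∈ balancedWhitemanClass p q g x i → s n = i) (hs0 : s 0 = 0)
    {n : ℕ} (hn : n < p * q) :
    2 * (s n : ℤ) + whitemanSign (quadraticChar (ZMod p)) (quadraticChar (ZMod q)) n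
      = if n = 0 then 0 else 1 := by
  rcases eq_or_ne n 0 with rfl | hn0
  · simp [hs0, whitemanSign]
  suffices h : ∃ i < 2, whitemanSign (quadraticChar (ZMod p)) (quadraticChar (ZMod q)) n
      = (-1) ^ i ∧ n ∈ balancedWhitemanClass p q g x i by
    obtain ⟨i, hi, hsign, hmem⟩ := h
    rw [hsign, hs i hi n hn hmem, if_neg hn0]
    interval_cases i <;> norm_num
  by_cases hqn : q ∣ n
  · obtain ⟨i, hi, h, hmem⟩ := exists_whitemanSign_eq_of_dvd hpq hp2 hgp hn hn0 hqn
    exact ⟨i, hi, h, mem_union_left _ (mem_union_right _ hmem)⟩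
  by_cases hpn : p ∣ n
  · obtain ⟨i, hi, h, hmem⟩ :=
      exists_whitemanSign_eq_of_dvd hpq.symm hq2 hgq (mul_comm p q ▸ hn) hn0 hpn
    rw [mul_comm q p] at hmem
    exact ⟨i, hi, by rw [whitemanSign_comm, h], mem_union_right _ hmem⟩
  obtain ⟨i, hi, h, hmem⟩ := exists_mem_whitemanClass hpq hgcd hgp hgq hxp hxq hn
    (by rwa [Ne, ZMod.natCast_eq_zero_iff]) (by rwa [Ne, ZMod.natCast_eq_zero_iff])
  refine ⟨i, hi, ?_, mem_union_left _ (mem_union_left _ hmem)⟩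
  simp only [whitemanSign, if_neg hpn, if_neg hqn, mul_zero, add_zero, h]

theorem two_mul_sum_add_sum_eq_two_pow_sub_two {N : ℕ} (hN : N ≠ 0) {s : ℕ → ℕ} {f : ℕ → ℤ}
    (h : ∀ n < N, 2 * (s n : ℤ) + f n = if n = 0 then 0 else 1) :
    2 * ((∑ n ∈ range N, s n * 2 ^ n : ℕ) : ℤ) + ∑ n ∈ range N, f n * 2 ^ n = 2 ^ N - 2 := by
  obtain ⟨M, rfl⟩ := Nat.exists_eq_succ_of_ne_zero hN
  push_cast
  rw [mul_sum, ← sum_add_distrib,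
    sum_congr rfl fun n hn => by rw [← mul_assoc, ← add_mul, h n (mem_range.mp hn)],
    sum_range_succ']
  simp only [Nat.succ_ne_zero, if_false, one_mul, if_true, zero_mul, add_zero, pow_succ,
    ← sum_mul]
  linear_combination 2 * geom_sum_mul (2 : ℤ) M

theorem coprime_two_pow_sub_one_of_sum_whitemanSign {p q : ℕ} [hp : Fact p.Prime]
    [hq : Fact q.Prime] (hpq : p ≠ q) (hp4 : p % 4 = 1) (hq2 : q ≠ 2) {T : ℕ}
    (hT : 2 * (T : ℤ) + ∑ n ∈ range (p * q),
      whitemanSign (quadraticChar (ZMod p)) (quadraticChar (ZMod q)) n * 2 ^ n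
        = 2 ^ (p * q) - 2) :
    (2 ^ (p * q) - 1).Coprime T := by
  refine Nat.coprime_of_dvd fun r hr hr1 hrT => ?_
  have : Fact r.Prime := ⟨hr⟩
  have hN : p * q ≠ 0 := (Nat.mul_pos hp.out.pos hq.out.pos).ne'
  have hz : (2 : ZMod r) ^ (p * q) = 1 := by
    have h := (ZMod.natCast_eq_zero_iff _ r).mpr hr1
    rw [Nat.cast_sub Nat.one_le_two_pow] at h
    push_cast at h
    linear_combination h
  have hr2 : r ≠ 2 := by
    rintro rfl
    rw [show (2 : ZMod 2) = 0 from rfl, zero_pow hN] at hz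
    exact zero_ne_one hz
  have hz1 : (2 : ZMod r) ≠ 1 := fun h => one_ne_zero (by linear_combination h)
  have hcast := congrArg (Int.castRingHom (ZMod r)) hT
  simp only [map_add, map_mul, map_sum, map_pow, map_sub, map_natCast, map_ofNat,
    map_whitemanSign] at hcast
  rw [(ZMod.natCast_eq_zero_iff _ r).mpr hrT, hz] at hcast
  exact sum_whitemanSign_mul_pow_ne_neg_one hpq hp4 hq2 hr2 hz hz1 (by linear_combination hcast)

theorem whiteman_two_adic_complexity_lower_bound_general
    (p q : ℕ) (hp : p.Prime) (hq : q.Prime) (hpq : p ≠ q)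
    (hpo : Odd p) (hqo : Odd q)
    (hgcd : Nat.gcd (p - 1) (q - 1) = 2)
    (g : ℕ)
    (hgp : IsPrimitiveRoot (g : ZMod p) (p - 1))
    (hgq : IsPrimitiveRoot (g : ZMod q) (q - 1))
    (x : ℕ) (hxp : x % p = g % p) (hxq : x % q = 1)
    (e : ℕ) (he : e = (p - 1) * (q - 1) / 2)
    (D : ℕ → Finset ℕ)
    (hD : ∀ i, D i = (Finset.range e).image (fun s => g ^ s * x ^ i % (p * q)))
    (Dp : ℕ → Finset ℕ)
    (hDp : ∀ i, Dp i = (Finset.range ((p - 1) / 2)).image (fun t => g ^ (2 * t + i) % p))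
    (Dq : ℕ → Finset ℕ)
    (hDq : ∀ i, Dq i = (Finset.range ((q - 1) / 2)).image (fun t => g ^ (2 * t + i) % q))
    (DpQ : ℕ → Finset ℕ) (hDpQ : ∀ i, DpQ i = (Dp i).image (fun k => k * q % (p * q)))
    (DqP : ℕ → Finset ℕ) (hDqP : ∀ i, DqP i = (Dq i).image (fun k => k * p % (p * q)))
    (C0 C1 : Finset ℕ)
    (hC0 : C0 = insert 0 (D 0 ∪ DpQ 0 ∪ DqP 0))
    (hC1 : C1 = D 1 ∪ DpQ 1 ∪ DqP 1)
    (s : ℕ → ℕ)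
    (hs0 : ∀ i, i % (p * q) ∈ C0 → s i = 0)
    (hs1 : ∀ i, i % (p * q) ∈ C1 → s i = 1)
    (hp4 : p % 4 = 1)
    (S2 : ℕ) (hS2 : S2 = ∑ i ∈ Finset.range (p * q), s i * 2 ^ i) :
    p * q - p - q - 1 ≤
      Nat.log 2 ((2 ^ (p * q) - 1) / Nat.gcd (2 ^ (p * q) - 1) S2 + 1) := by
  have : Fact p.Prime := ⟨hp⟩
  have : Fact q.Prime := ⟨hq⟩
  have hp2 : p ≠ 2 := by rintro rfl; exact absurd hpo (by decide)
  have hq2 : q ≠ 2 := by rintro rfl; exact absurd hqo (by decide)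
  subst he
  have hs : ∀ i < 2, ∀ n < p * q, n ∈ balancedWhitemanClass p q g x i → s n = i := by
    intro i hi n hn hmem
    rw [← Nat.mod_eq_of_lt hn] at hmem
    interval_cases i
    · exact hs0 n (by rw [hC0, hD, hDpQ, hDqP, hDp, hDq]; exact mem_insert_of_mem hmem)
    · exact hs1 n (by rw [hC1, hD, hDpQ, hDqP, hDp, hDq]; exact hmem)
  have hsign := fun n => two_mul_add_whitemanSign_eq (n := n) hpq hp2 hq2 hgcd hgp hgq hxp hxq hs
    (hs0 0 (by rw [Nat.zero_mod, hC0]; exact mem_insert_self _ _))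
  have hsum := two_mul_sum_add_sum_eq_two_pow_sub_two (Nat.mul_pos hp.pos hq.pos).ne' hsign
  rw [← hS2] at hsum
  rw [(coprime_two_pow_sub_one_of_sum_whitemanSign hpq hp4 hq2 hsum).gcd_eq_one,
    Nat.div_one, Nat.sub_add_cancel Nat.one_le_two_pow, Nat.log_pow one_lt_two]
  omega

/-- Under `p ≡ 1 (mod 4)`, `q ≡ 3 (mod 4)` and `(|q-p|+1)² < pq`, the 2-adic
complexity of the balanced Whiteman generalized cyclotomic sequence satisfies
`Φ₂(s) ≥ pq - p - q - 1`. -/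
theorem whiteman_two_adic_complexity_lower_bound
    (p q : ℕ) (hp : p.Prime) (hq : q.Prime) (hpq : p ≠ q)
    (hpo : Odd p) (hqo : Odd q)
    (hgcd : Nat.gcd (p - 1) (q - 1) = 2)
    (g : ℕ)
    (hgp : IsPrimitiveRoot (g : ZMod p) (p - 1))
    (hgq : IsPrimitiveRoot (g : ZMod q) (q - 1))
    (x : ℕ) (hxlt : x < p * q) (hxp : x % p = g % p) (hxq : x % q = 1)
    (e : ℕ) (he : e = (p - 1) * (q - 1) / 2)
    (D : ℕ → Finset ℕ)
    (hD : ∀ i, D i = (Finset.range e).image (fun s => g ^ s * x ^ i % (p * q)))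
    (Dp : ℕ → Finset ℕ)
    (hDp : ∀ i, Dp i = (Finset.range ((p - 1) / 2)).image (fun t => g ^ (2 * t + i) % p))
    (Dq : ℕ → Finset ℕ)
    (hDq : ∀ i, Dq i = (Finset.range ((q - 1) / 2)).image (fun t => g ^ (2 * t + i) % q))
    (DpQ : ℕ → Finset ℕ) (hDpQ : ∀ i, DpQ i = (Dp i).image (fun k => k * q % (p * q)))
    (DqP : ℕ → Finset ℕ) (hDqP : ∀ i, DqP i = (Dq i).image (fun k => k * p % (p * q)))
    (C0 C1 : Finset ℕ)
    (hC0 : C0 = insert 0 (D 0 ∪ DpQ 0 ∪ DqP 0))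
    (hC1 : C1 = D 1 ∪ DpQ 1 ∪ DqP 1)
    (s : ℕ → ℕ)
    (hs0 : ∀ i, i % (p * q) ∈ C0 → s i = 0)
    (hs1 : ∀ i, i % (p * q) ∈ C1 → s i = 1)
    (hp4 : p % 4 = 1) (hq4 : q % 4 = 3)
    (hsize : (((q : ℤ) - p).natAbs + 1) ^ 2 < p * q)
    (S2 : ℕ) (hS2 : S2 = ∑ i ∈ Finset.range (p * q), s i * 2 ^ i) :
    p * q - p - q - 1 ≤
      Nat.log 2 ((2 ^ (p * q) - 1) / Nat.gcd (2 ^ (p * q) - 1) S2 + 1) :=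
  whiteman_two_adic_complexity_lower_bound_general p q hp hq hpq hpo hqo hgcd g hgp hgq x hxp hxq e
    he D hD Dp hDp Dq hDq DpQ hDpQ DqP hDqP C0 C1 hC0 hC1 s hs0 hs1 hp4 S2 hS2
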